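/- (Current–Dirichlet form estimate.) Let N ≥ 3 and let ν_N^eq be the product standard Gaussian measure on ℝ^{ℤ/N}. Then for every vector of coefficients c ∈ ℝ^{ℤ/N} and every C¹ function ρ : ℝ^{ℤ/N} → ℝ which is bounded with bounded first derivatives, (∫ ρ²·Σ_{i∈ℤ/N} c_i w_i dν_N^eq)² ≤ 4·(∫ Σ_{i∈ℤ/N} a_i c_i² ρ² dν_N^eq)·(∫ Σ_{i∈ℤ/N} a_i (X_i ρ)² dν_N^eq). -/

import Mathlib

open MeasureTheory

/-- The vector field direction `e_{i−1} − 2e_i + e_{i+1}` on the periodic lattice `ℤ/N`. -/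
noncomputable def latDir {N : ℕ} [NeZero N] (i : ZMod N) : ZMod N → ℝ :=
  fun j => (Pi.single (i - 1) (1:ℝ) : ZMod N → ℝ) j - 2 * (Pi.single i (1:ℝ) : ZMod N → ℝ) j + (Pi.single (i + 1) (1:ℝ) : ZMod N → ℝ) j

/-- `X_i f = ∂_{i−1}f − 2∂_i f + ∂_{i+1} f`, as a directional derivative. -/
noncomputable def Xfield {N : ℕ} [NeZero N] (f : (ZMod N → ℝ) → ℝ)
    (i : ZMod N) (x : ZMod N → ℝ) : ℝ :=
  fderiv ℝ f x (latDir i)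

/-- `a_i(x) = a(x_{i−1}, x_i, x_{i+1})`. -/
def aSite {N : ℕ} [NeZero N] (a : ℝ × ℝ × ℝ → ℝ) (i : ZMod N) (x : ZMod N → ℝ) : ℝ :=
  a (x (i - 1), x i, x (i + 1))

/-- The instantaneous current
`w_i(x) = a_i(x)·(x_{i−1} − 2x_i + x_{i+1}) − (∂_{−1}a − 2∂_0 a + ∂_1 a)(x_{i−1}, x_i, x_{i+1})`. -/
noncomputable def wCurrent {N : ℕ} [NeZero N] (a : ℝ × ℝ × ℝ → ℝ) (i : ZMod N)
    (x : ZMod N → ℝ) : ℝ :=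
  aSite a i x * (x (i - 1) - 2 * x i + x (i + 1)) -
    (fderiv ℝ a (x (i - 1), x i, x (i + 1)) (1, 0, 0)
      - 2 * fderiv ℝ a (x (i - 1), x i, x (i + 1)) (0, 1, 0)
      + fderiv ℝ a (x (i - 1), x i, x (i + 1)) (0, 0, 1))

/-- The product standard Gaussian measure `ν_N^eq` on `ℝ^{ℤ/N}`. -/
noncomputable def nuEq (N : ℕ) [NeZero N] : Measure (ZMod N → ℝ) :=
  Measure.pi fun _ => ProbabilityTheory.gaussianReal 0 1



open ProbabilityTheory Real Filter
open scoped NNReal ENNReal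

section helpersIBP

noncomputable def gpdf : ℝ → ℝ := gaussianPDFReal 0 1

lemma gpdf_eq : gpdf = fun t => (Real.sqrt (2 * π))⁻¹ * Real.exp (-(t^2)/2) := by
  funext t; simp [gpdf, gaussianPDFReal]

lemma gpdf_nonneg (t : ℝ) : 0 ≤ gpdf t := gaussianPDFReal_nonneg 0 1 t

lemma gpdf_cont : Continuous gpdf := by
  rw [gpdf_eq]
  exact continuous_const.mul (((continuous_pow 2).neg.div_const 2).rexp)

lemma integral_gauss_eq (f : ℝ → ℝ) :
    ∫ x, f x ∂(gaussianReal 0 1) = ∫ x, gpdf x * f x := by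
  rw [gaussianReal_of_var_ne_zero _ one_ne_zero]
  have h1 : (gaussianPDF 0 1) = fun x => ((Real.toNNReal (gpdf x) : ℝ≥0) : ℝ≥0∞) := by
    funext x; rfl
  rw [h1]
  rw [integral_withDensity_eq_integral_smul
    (gpdf_cont.measurable.real_toNNReal) f]
  congr 1; funext x
  simp [NNReal.smul_def, Real.coe_toNNReal _ (gpdf_nonneg x)]

lemma integrable_abs_mul_gpdf : Integrable (fun t : ℝ => |t| * gpdf t) := by
  have h := (integrable_mul_exp_neg_mul_sq (b := (1:ℝ)/2) one_half_pos).abs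
  refine (h.const_mul ((Real.sqrt (2 * π))⁻¹)).mono'
    (Continuous.aestronglyMeasurable (continuous_abs.mul gpdf_cont)) ?_
  filter_upwards with t
  rw [gpdf_eq]
  have h2 : -(t^2)/2 = -(1/2 * t^2) := by ring
  rw [Real.norm_eq_abs, abs_mul, abs_abs, abs_mul, abs_of_nonneg (le_of_lt (by positivity : (0:ℝ) < (Real.sqrt (2*π))⁻¹)), abs_of_nonneg (Real.exp_nonneg _), h2]
  rw [abs_mul, abs_of_nonneg (Real.exp_nonneg _)]
  ring_nf
  exact le_refl _

lemma integrable_gpdf : Integrable gpdf := integrable_gaussianPDFReal 0 1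

lemma gpdf_tendsto_atTop : Tendsto gpdf atTop (nhds 0) := by
  rw [gpdf_eq]
  rw [show (0:ℝ) = (Real.sqrt (2 * π))⁻¹ * 0 by ring]
  apply Tendsto.const_mul
  apply Real.tendsto_exp_atBot.comp
  apply Filter.Tendsto.atBot_div_const two_pos
  exact tendsto_neg_atBot_iff.mpr (tendsto_pow_atTop two_ne_zero)

lemma gpdf_tendsto_atBot : Tendsto gpdf atBot (nhds 0) := by
  rw [gpdf_eq]
  rw [show (0:ℝ) = (Real.sqrt (2 * π))⁻¹ * 0 by ring]
  apply Tendsto.const_mul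
  apply Real.tendsto_exp_atBot.comp
  apply Filter.Tendsto.atBot_div_const two_pos
  rw [tendsto_neg_atBot_iff]
  have : (fun t : ℝ => t ^ 2) = (fun t : ℝ => |t| ^ 2) := by funext t; simp [sq_abs]
  rw [this]
  exact (tendsto_pow_atTop two_ne_zero).comp tendsto_abs_atBot_atTop

lemma gpdf_hasDeriv (t : ℝ) : HasDerivAt gpdf (-t * gpdf t) t := by
  have h1 : HasDerivAt (fun s : ℝ => -(s^2)/2) (-t) t := by
    have := ((hasDerivAt_pow 2 t).neg).div_const 2
    exact this.congr_deriv (by norm_num; ring)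
  have h2 := h1.exp
  have h3 := h2.const_mul ((Real.sqrt (2 * π))⁻¹)
  rw [gpdf_eq]
  exact h3.congr_deriv (by beta_reduce; ring)

lemma integrable_bddlin_mul_gpdf (u : ℝ → ℝ) (hu : Continuous u) (C : ℝ)
    (hb : ∀ t, |u t| ≤ C + C * |t|) : Integrable (fun t => u t * gpdf t) := by
  refine (((integrable_gpdf.const_mul C).add
    (integrable_abs_mul_gpdf.const_mul C)).mono'
    (Continuous.aestronglyMeasurable (hu.mul gpdf_cont)) ?_)
  filter_upwards with t
  rw [Real.norm_eq_abs, abs_mul, abs_of_nonneg (gpdf_nonneg t)]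
  calc |u t| * gpdf t ≤ (C + C * |t|) * gpdf t :=
        mul_le_mul_of_nonneg_right (hb t) (gpdf_nonneg t)
    _ = C * gpdf t + C * (|t| * gpdf t) := by ring

lemma gauss_ibp1 (h h' : ℝ → ℝ) (hd : ∀ t, HasDerivAt h (h' t) t)
    (hc : Continuous h') (M : ℝ) (hb : ∀ t, |h t| ≤ M) (hb' : ∀ t, |h' t| ≤ M) :
    ∫ t, h' t ∂(gaussianReal 0 1) = ∫ t, t * h t ∂(gaussianReal 0 1) := by
  have hM : 0 ≤ M := le_trans (abs_nonneg _) (hb 0)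
  have hcont : Continuous h := by
    have : Differentiable ℝ h := fun t => (hd t).differentiableAt
    exact this.continuous
  -- integrability of the two pieces
  have int1 : Integrable (fun t => h' t * gpdf t) :=
    integrable_bddlin_mul_gpdf h' hc M (fun t => le_add_of_le_of_nonneg (hb' t)
      (by positivity))
  have int2 : Integrable (fun t => (t * h t) * gpdf t) := by
    refine integrable_bddlin_mul_gpdf _ (continuous_id.mul hcont) M (fun t => ?_)
    rw [abs_mul]
    calc |t| * |h t| ≤ |t| * M := mul_le_mul_of_nonneg_left (hb t) (abs_nonneg t)
      _ ≤ M + M * |t| := by nlinarith [abs_nonneg t]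
  -- F = h * gpdf tends to 0 at both ends
  have htends : ∀ l : Filter ℝ, Tendsto gpdf l (nhds 0) →
      Tendsto (fun t => h t * gpdf t) l (nhds 0) := by
    intro l hl
    apply squeeze_zero_norm (a := fun t => M * gpdf t)
    · intro t
      rw [Real.norm_eq_abs, abs_mul, abs_of_nonneg (gpdf_nonneg t)]
      exact mul_le_mul_of_nonneg_right (hb t) (gpdf_nonneg t)
    · rw [show (0:ℝ) = M * 0 by ring]
      exact hl.const_mul M
  have key : ∫ t, (h' t * gpdf t - (t * h t) * gpdf t) = 0 := by
    have hder : ∀ t, HasDerivAt (fun s => h s * gpdf s)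
        (h' t * gpdf t - (t * h t) * gpdf t) t := by
      intro t
      have := (hd t).mul (gpdf_hasDeriv t)
      exact this.congr_deriv (by ring)
    have hint : Integrable (fun t => h' t * gpdf t - (t * h t) * gpdf t) :=
      int1.sub int2
    have := integral_of_hasDerivAt_of_tendsto hder hint
      (htends atBot gpdf_tendsto_atBot) (htends atTop gpdf_tendsto_atTop)
    simpa using this
  rw [integral_gauss_eq, integral_gauss_eq]
  have := integral_sub int1 int2
  rw [key] at this
  have h2 : ∫ t, h' t * gpdf t = ∫ t, (t * h t) * gpdf t := by linarith
  calc ∫ x, gpdf x * h' x = ∫ x, h' x * gpdf x := by congr 1; funext x; ring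
    _ = ∫ x, (x * h x) * gpdf x := h2
    _ = ∫ x, gpdf x * (x * h x) := by congr 1; funext x; ring

section coordIBP

variable {N : ℕ} [NeZero N]

instance uniqueEqSub (j : ZMod N) : Unique {i : ZMod N // i = j} :=
  ⟨⟨⟨j, rfl⟩⟩, fun x => Subtype.ext x.2⟩

noncomputable def Tmap (j : ZMod N) :
    ℝ × ({i : ZMod N // ¬ i = j} → ℝ) ≃ᵐ (ZMod N → ℝ) :=
  ((MeasurableEquiv.funUnique {i : ZMod N // i = j} ℝ).symm.prodCongr
      (MeasurableEquiv.refl ({i : ZMod N // ¬ i = j} → ℝ))).trans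
    (MeasurableEquiv.piEquivPiSubtypeProd (fun _ : ZMod N => ℝ) (fun i => i = j)).symm

noncomputable def nuRest (j : ZMod N) : Measure ({i : ZMod N // ¬ i = j} → ℝ) :=
  Measure.pi fun _ => ProbabilityTheory.gaussianReal 0 1

instance (j : ZMod N) : IsProbabilityMeasure (nuRest j) := by
  unfold nuRest; infer_instance

instance : IsProbabilityMeasure (nuEq N) := by
  unfold nuEq; infer_instance

lemma measurePreserving_Tmap (j : ZMod N) :
    MeasurePreserving (Tmap j)
      ((ProbabilityTheory.gaussianReal 0 1).prod (nuRest j)) (nuEq N) := by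
  have h1 := measurePreserving_piEquivPiSubtypeProd
    (fun _ : ZMod N => ProbabilityTheory.gaussianReal 0 1) (fun i => i = j)
  have h2 := measurePreserving_funUnique (ProbabilityTheory.gaussianReal 0 1)
    {i : ZMod N // i = j}
  have h2' := h2.symm (MeasurableEquiv.funUnique {i : ZMod N // i = j} ℝ)
  have h2'' : MeasurePreserving
      (⇑(MeasurableEquiv.funUnique {i : ZMod N // i = j} ℝ).symm)
      (ProbabilityTheory.gaussianReal 0 1)
      (@Measure.pi {i : ZMod N // i = j} (fun _ => ℝ) (Subtype.fintype _) (fun _ => inferInstance)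
        (fun _ => ProbabilityTheory.gaussianReal 0 1)) := by
    convert h2' using 2
  have h3 := (h1.symm _).comp (h2''.prod (MeasurePreserving.id (nuRest j)))
  exact h3

lemma Tmap_apply (j : ZMod N) (p : ℝ × ({i : ZMod N // ¬ i = j} → ℝ)) (k : ZMod N) :
    Tmap j p k = if h : k = j then p.1 else p.2 ⟨k, h⟩ := by
  rfl

lemma Tmap_fst (j : ZMod N) (p : ℝ × ({i : ZMod N // ¬ i = j} → ℝ)) :
    Tmap j p j = p.1 := by
  rw [Tmap_apply]; simp

lemma Tmap_line (j : ZMod N) (y : {i : ZMod N // ¬ i = j} → ℝ) (t : ℝ) :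
    Tmap j (t, y) = Tmap j (0, y) + t • (Pi.single j 1 : ZMod N → ℝ) := by
  funext k
  simp only [Pi.add_apply, Pi.smul_apply, smul_eq_mul, Tmap_apply, Pi.single_apply]
  by_cases h : k = j <;> simp [h]

lemma integrable_gauss_iff (f : ℝ → ℝ) (hf : Measurable f) :
    Integrable f (gaussianReal 0 1) ↔ Integrable (fun x => f x * gpdf x) := by
  rw [gaussianReal_of_var_ne_zero _ one_ne_zero,
    integrable_withDensity_iff (measurable_gaussianPDF 0 1)
      (ae_of_all _ fun x => ENNReal.ofReal_lt_top)]
  apply integrable_congr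
  filter_upwards with x
  show f x * (ENNReal.ofReal (gaussianPDFReal 0 1 x)).toReal = f x * gpdf x
  rw [ENNReal.toReal_ofReal (gaussianPDFReal_nonneg 0 1 x)]
  rfl

lemma integrable_abs_gauss : Integrable (fun t : ℝ => |t|) (gaussianReal 0 1) :=
  (integrable_gauss_iff _ measurable_abs).2 integrable_abs_mul_gpdf

lemma norm_single_le (j : ZMod N) : ‖(Pi.single j 1 : ZMod N → ℝ)‖ ≤ 1 := by
  rw [pi_norm_le_iff_of_nonneg zero_le_one]
  intro k
  rw [Pi.single_apply]
  split <;> simp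

lemma integrable_bdd (F : (ZMod N → ℝ) → ℝ) (hm : Measurable F) (C : ℝ)
    (hb : ∀ x, |F x| ≤ C) : Integrable F (nuEq N) :=
  (integrable_const C).mono' hm.aestronglyMeasurable (ae_of_all _ fun x => hb x)

lemma integrable_coord_mul (k : ZMod N) (G : (ZMod N → ℝ) → ℝ) (hm : Measurable G)
    (C : ℝ) (hb : ∀ x, |G x| ≤ C) : Integrable (fun x => x k * G x) (nuEq N) := by
  rw [← (measurePreserving_Tmap k).integrable_comp_emb (Tmap k).measurableEmbedding]
  refine (integrable_abs_gauss.mul_prod (integrable_const C)).mono'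
    ((((measurable_pi_apply k).comp (Tmap k).measurable).mul
      (hm.comp (Tmap k).measurable)).aestronglyMeasurable) ?_
  filter_upwards with p
  simp only [Function.comp_apply, Real.norm_eq_abs, abs_mul, Tmap_fst]
  exact mul_le_mul le_rfl (hb _) (abs_nonneg _) (abs_nonneg _)

lemma ibp_coord (j : ZMod N) (g : (ZMod N → ℝ) → ℝ) (hg : ContDiff ℝ 1 g) (M : ℝ)
    (hb : ∀ x, |g x| ≤ M) (hb' : ∀ x, ‖fderiv ℝ g x‖ ≤ M) :
    ∫ x, fderiv ℝ g x (Pi.single j 1) ∂(nuEq N) = ∫ x, x j * g x ∂(nuEq N) := by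
  have hM : 0 ≤ M := le_trans (abs_nonneg _) (hb 0)
  have hgc : Continuous g := hg.continuous
  have hgd : Differentiable ℝ g := hg.differentiable one_ne_zero
  have hfc : Continuous (fun x => fderiv ℝ g x) := hg.continuous_fderiv one_ne_zero
  have hF1c : Continuous (fun x => fderiv ℝ g x (Pi.single j 1)) :=
    hfc.clm_apply continuous_const
  have hbF1 : ∀ x : ZMod N → ℝ, |fderiv ℝ g x (Pi.single j 1)| ≤ M := by
    intro x
    calc |fderiv ℝ g x (Pi.single j 1)| ≤ ‖fderiv ℝ g x‖ * ‖(Pi.single j 1 : ZMod N → ℝ)‖ :=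
          (fderiv ℝ g x).le_opNorm _
      _ ≤ M * 1 := mul_le_mul (hb' x) (norm_single_le j) (norm_nonneg _) hM
      _ = M := mul_one M
  have int1 : Integrable (fun x => fderiv ℝ g x (Pi.single j 1)) (nuEq N) :=
    integrable_bdd _ hF1c.measurable M hbF1
  have int2 : Integrable (fun x => x j * g x) (nuEq N) :=
    integrable_coord_mul j g hgc.measurable M hb
  have hT := measurePreserving_Tmap j
  have emb := (Tmap j).measurableEmbedding
  have intc1 : Integrable (fun p : ℝ × ({i : ZMod N // ¬ i = j} → ℝ) =>
      fderiv ℝ g (Tmap j p) (Pi.single j 1))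
      ((gaussianReal 0 1).prod (nuRest j)) := (hT.integrable_comp_emb emb).2 int1
  have intc2 : Integrable (fun p : ℝ × ({i : ZMod N // ¬ i = j} → ℝ) =>
      Tmap j p j * g (Tmap j p))
      ((gaussianReal 0 1).prod (nuRest j)) := (hT.integrable_comp_emb emb).2 int2
  rw [← hT.integral_comp' (fun x => fderiv ℝ g x (Pi.single j 1)),
    ← hT.integral_comp' (fun x => x j * g x)]
  rw [integral_prod_symm _ intc1, integral_prod_symm _ intc2]
  refine integral_congr_ae (ae_of_all _ fun y => ?_)
  have hline := Tmap_line j y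
  have hTc : Continuous (fun t : ℝ => Tmap j (t, y)) := by
    have : (fun t : ℝ => Tmap j (t, y)) =
        (fun t : ℝ => Tmap j (0, y) + t • (Pi.single j 1 : ZMod N → ℝ)) := funext hline
    rw [this]
    exact continuous_const.add (continuous_id.smul continuous_const)
  have hd : ∀ t : ℝ, HasDerivAt (fun s => g (Tmap j (s, y)))
      (fderiv ℝ g (Tmap j (t, y)) (Pi.single j 1)) t := by
    intro t
    have h0 : HasDerivAt (fun s : ℝ => Tmap j (0, y) + s • (Pi.single j 1 : ZMod N → ℝ))
        (Pi.single j 1) t := by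
      simpa using ((hasDerivAt_id t).smul_const (Pi.single j 1 : ZMod N → ℝ)).const_add
        (Tmap j (0, y))
    have key : ∀ s : ℝ, Tmap j (s, y) =
        Tmap j (0, y) + s • (Pi.single j 1 : ZMod N → ℝ) := hline
    generalize hB : Tmap j (0, y) = b at h0 key
    simp only [key]
    exact ((hgd _).hasFDerivAt).comp_hasDerivAt t h0
  have := gauss_ibp1 (fun s => g (Tmap j (s, y)))
    (fun s => fderiv ℝ g (Tmap j (s, y)) (Pi.single j 1)) hd
    ((hfc.comp hTc).clm_apply continuous_const) M (fun t => hb _) (fun t => hbF1 _)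
  simpa [Tmap_fst] using this

lemma latDir_eq (i : ZMod N) : latDir i = (Pi.single (i-1) 1 : ZMod N → ℝ)
    - (2:ℝ) • (Pi.single i 1 : ZMod N → ℝ) + (Pi.single (i+1) 1 : ZMod N → ℝ) := by
  funext k
  simp [latDir, Pi.smul_apply, smul_eq_mul]

lemma clm_latDir (i : ZMod N) (L : (ZMod N → ℝ) →L[ℝ] ℝ) :
    L (latDir i) = L (Pi.single (i-1) 1) - 2 * L (Pi.single i 1) + L (Pi.single (i+1) 1) := by
  rw [latDir_eq, map_add, map_sub, L.map_smul, smul_eq_mul]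

lemma abs_single_le (k l : ZMod N) : |(Pi.single k 1 : ZMod N → ℝ) l| ≤ 1 := by
  rw [Pi.single_apply]
  split <;> simp

lemma norm_latDir_le (i : ZMod N) : ‖latDir i‖ ≤ 4 := by
  rw [pi_norm_le_iff_of_nonneg (by norm_num : (0:ℝ) ≤ 4)]
  intro k
  show |(Pi.single (i-1) 1 : ZMod N → ℝ) k - 2 * (Pi.single i 1 : ZMod N → ℝ) k
    + (Pi.single (i+1) 1 : ZMod N → ℝ) k| ≤ 4
  obtain ⟨l1, r1⟩ := abs_le.1 (abs_single_le (i-1) k)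
  obtain ⟨l2, r2⟩ := abs_le.1 (abs_single_le i k)
  obtain ⟨l3, r3⟩ := abs_le.1 (abs_single_le (i+1) k)
  exact abs_le.2 ⟨by linarith, by linarith⟩

lemma ibp_dir (i : ZMod N) (g : (ZMod N → ℝ) → ℝ) (hg : ContDiff ℝ 1 g) (M : ℝ)
    (hb : ∀ x, |g x| ≤ M) (hb' : ∀ x, ‖fderiv ℝ g x‖ ≤ M) :
    ∫ x, fderiv ℝ g x (latDir i) ∂(nuEq N)
      = ∫ x, (x (i-1) - 2 * x i + x (i+1)) * g x ∂(nuEq N) := by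
  have hM : 0 ≤ M := le_trans (abs_nonneg _) (hb 0)
  have hgc : Continuous g := hg.continuous
  have hfc : Continuous (fun x => fderiv ℝ g x) := hg.continuous_fderiv one_ne_zero
  have hbF : ∀ (k : ZMod N) (x : ZMod N → ℝ), |fderiv ℝ g x (Pi.single k 1)| ≤ M := by
    intro k x
    calc |fderiv ℝ g x (Pi.single k 1)| ≤ ‖fderiv ℝ g x‖ * ‖(Pi.single k 1 : ZMod N → ℝ)‖ :=
          (fderiv ℝ g x).le_opNorm _
      _ ≤ M * 1 := mul_le_mul (hb' x) (norm_single_le k) (norm_nonneg _) hM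
      _ = M := mul_one M
  have intF : ∀ k : ZMod N, Integrable (fun x => fderiv ℝ g x (Pi.single k 1)) (nuEq N) :=
    fun k => integrable_bdd _ (hfc.clm_apply continuous_const).measurable M (hbF k)
  have intG : ∀ k : ZMod N, Integrable (fun x => x k * g x) (nuEq N) :=
    fun k => integrable_coord_mul k g hgc.measurable M hb
  have I1 : Integrable (fun x => fderiv ℝ g x (Pi.single (i-1) 1)
      - 2 * fderiv ℝ g x (Pi.single i 1)) (nuEq N) :=
    (intF (i-1)).sub ((intF i).const_mul 2)
  have I2 : Integrable (fun x => x (i-1) * g x - 2 * (x i * g x)) (nuEq N) :=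
    (intG (i-1)).sub ((intG i).const_mul 2)
  calc ∫ x, fderiv ℝ g x (latDir i) ∂(nuEq N)
      = ∫ x, (fderiv ℝ g x (Pi.single (i-1) 1) - 2 * fderiv ℝ g x (Pi.single i 1))
          + fderiv ℝ g x (Pi.single (i+1) 1) ∂(nuEq N) := by
        refine integral_congr_ae (ae_of_all _ fun x => ?_)
        show fderiv ℝ g x (latDir i) = _
        rw [clm_latDir]
    _ = (∫ x, fderiv ℝ g x (Pi.single (i-1) 1) ∂(nuEq N)
          - 2 * ∫ x, fderiv ℝ g x (Pi.single i 1) ∂(nuEq N))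
          + ∫ x, fderiv ℝ g x (Pi.single (i+1) 1) ∂(nuEq N) := by
        rw [integral_add I1 (intF (i+1)),
          integral_sub (intF (i-1)) ((intF i).const_mul 2), MeasureTheory.integral_const_mul]
    _ = (∫ x, x (i-1) * g x ∂(nuEq N) - 2 * ∫ x, x i * g x ∂(nuEq N))
          + ∫ x, x (i+1) * g x ∂(nuEq N) := by
        rw [ibp_coord (i-1) g hg M hb hb', ibp_coord i g hg M hb hb',
          ibp_coord (i+1) g hg M hb hb']
    _ = ∫ x, (x (i-1) * g x - 2 * (x i * g x)) + x (i+1) * g x ∂(nuEq N) := by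
        rw [integral_add I2 (intG (i+1)),
          integral_sub (intG (i-1)) ((intG i).const_mul 2), MeasureTheory.integral_const_mul]
    _ = ∫ x, (x (i-1) - 2 * x i + x (i+1)) * g x ∂(nuEq N) := by
        refine integral_congr_ae (ae_of_all _ fun x => ?_)
        ring

end coordIBP

section siteLayer

variable {N : ℕ} [NeZero N]

noncomputable def proj3 (i : ZMod N) : (ZMod N → ℝ) →L[ℝ] ℝ × ℝ × ℝ :=
  (ContinuousLinearMap.proj (i-1)).prod
    ((ContinuousLinearMap.proj i).prod (ContinuousLinearMap.proj (i+1)))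

lemma proj3_apply (i : ZMod N) (x : ZMod N → ℝ) :
    proj3 i x = (x (i-1), x i, x (i+1)) := rfl

lemma norm_proj3_le (i : ZMod N) : ‖(proj3 i : (ZMod N → ℝ) →L[ℝ] ℝ × ℝ × ℝ)‖ ≤ 1 := by
  refine ContinuousLinearMap.opNorm_le_bound _ zero_le_one fun x => ?_
  rw [one_mul, proj3_apply]
  rw [Prod.norm_def, Prod.norm_def]
  exact max_le (norm_le_pi_norm x _) (max_le (norm_le_pi_norm x _) (norm_le_pi_norm x _))

/-- the derivative combination part of the current -/
noncomputable def Kfun {N : ℕ} [NeZero N] (a : ℝ × ℝ × ℝ → ℝ) (i : ZMod N)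
    (x : ZMod N → ℝ) : ℝ :=
  fderiv ℝ a (x (i - 1), x i, x (i + 1)) (1, 0, 0)
    - 2 * fderiv ℝ a (x (i - 1), x i, x (i + 1)) (0, 1, 0)
    + fderiv ℝ a (x (i - 1), x i, x (i + 1)) (0, 0, 1)

lemma wCurrent_eq (a : ℝ × ℝ × ℝ → ℝ) (i : ZMod N) (x : ZMod N → ℝ) :
    wCurrent a i x = aSite a i x * (x (i-1) - 2 * x i + x (i+1)) - Kfun a i x := rfl

variable {a : ℝ × ℝ × ℝ → ℝ}

lemma aSite_comp (i : ZMod N) : aSite a i = fun x => a (proj3 i x) := rfl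

lemma contDiff_aSite (ha : ContDiff ℝ 1 a) (i : ZMod N) : ContDiff ℝ 1 (aSite a i) := by
  rw [aSite_comp]
  exact ha.comp (proj3 i).contDiff

lemma fderiv_aSite (ha : ContDiff ℝ 1 a) (i : ZMod N) (x : ZMod N → ℝ) :
    fderiv ℝ (aSite a i) x = (fderiv ℝ a (proj3 i x)).comp (proj3 i) := by
  rw [aSite_comp]
  rw [show (fun x => a (proj3 i x)) = a ∘ (proj3 i) from rfl]
  rw [fderiv_comp x ((ha.differentiable one_ne_zero) _) ((proj3 i).differentiableAt)]
  rw [(proj3 i).fderiv]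

lemma norm_fderiv_aSite_le (ha : ContDiff ℝ 1 a) (i : ZMod N) (x : ZMod N → ℝ) (Ma : ℝ)
    (hMa : ∀ p, ‖fderiv ℝ a p‖ ≤ Ma) : ‖fderiv ℝ (aSite a i) x‖ ≤ Ma := by
  have hMa0 : 0 ≤ Ma := le_trans (norm_nonneg _) (hMa 0)
  rw [fderiv_aSite ha i x]
  calc ‖(fderiv ℝ a (proj3 i x)).comp (proj3 i)‖
      ≤ ‖fderiv ℝ a (proj3 i x)‖ * ‖(proj3 i : (ZMod N → ℝ) →L[ℝ] ℝ × ℝ × ℝ)‖ :=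
        ContinuousLinearMap.opNorm_comp_le _ _
    _ ≤ Ma * 1 := mul_le_mul (hMa _) (norm_proj3_le i) (norm_nonneg _) hMa0
    _ = Ma := mul_one Ma

lemma zmod_sub_one_ne (hN : 3 ≤ N) (i : ZMod N) : i - 1 ≠ i := by
  haveI : Fact (1 < N) := ⟨by omega⟩
  intro h
  have : (1 : ZMod N) = 0 := by
    have := sub_eq_self.mp h
    simpa using this
  exact one_ne_zero this

lemma zmod_add_one_ne (hN : 3 ≤ N) (i : ZMod N) : i + 1 ≠ i := by
  haveI : Fact (1 < N) := ⟨by omega⟩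
  intro h
  exact one_ne_zero (add_eq_left.mp h)

lemma zmod_sub_add_ne (hN : 3 ≤ N) (i : ZMod N) : i - 1 ≠ i + 1 := by
  intro h
  have h2 : ((2 : ℕ) : ZMod N) = 0 := by
    have : (2 : ZMod N) = 0 := by linear_combination -h
    simpa using this
  rw [ZMod.natCast_eq_zero_iff] at h2
  have := Nat.le_of_dvd (by norm_num) h2
  omega

lemma latDir_sub_one (hN : 3 ≤ N) (i : ZMod N) : latDir i (i - 1) = 1 := by
  have h1 := zmod_sub_one_ne hN i
  have h2 := zmod_sub_add_ne hN i
  simp [latDir, Pi.single_apply, h1, h2]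

lemma latDir_self (hN : 3 ≤ N) (i : ZMod N) : latDir i i = -2 := by
  have h1 := zmod_sub_one_ne hN i
  have h2 := zmod_add_one_ne hN i
  simp [latDir, Pi.single_apply, Ne.symm h1, Ne.symm h2]

lemma latDir_add_one (hN : 3 ≤ N) (i : ZMod N) : latDir i (i + 1) = 1 := by
  have h1 := zmod_add_one_ne hN i
  have h2 := zmod_sub_add_ne hN i
  simp [latDir, Pi.single_apply, h1, Ne.symm h2]

lemma fderiv_aSite_latDir (ha : ContDiff ℝ 1 a) (hN : 3 ≤ N) (i : ZMod N) (x : ZMod N → ℝ) :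
    fderiv ℝ (aSite a i) x (latDir i) = Kfun a i x := by
  rw [fderiv_aSite ha i x]
  have hval : proj3 i (latDir i) = ((1:ℝ), (-2:ℝ), (1:ℝ)) := by
    rw [proj3_apply, latDir_sub_one hN, latDir_self hN, latDir_add_one hN]
  rw [ContinuousLinearMap.comp_apply, hval]
  have hdec : ((1:ℝ), (-2:ℝ), (1:ℝ))
      = ((1:ℝ),(0:ℝ),(0:ℝ)) - (2:ℝ) • ((0:ℝ),(1:ℝ),(0:ℝ)) + ((0:ℝ),(0:ℝ),(1:ℝ)) := by
    simp [Prod.ext_iff]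
  rw [hdec, map_add, map_sub, (fderiv ℝ a (proj3 i x)).map_smul, smul_eq_mul]
  rw [Kfun, proj3_apply]

end siteLayer

section currentSite

variable {N : ℕ} [NeZero N] {a : ℝ × ℝ × ℝ → ℝ} {ρ : (ZMod N → ℝ) → ℝ}

lemma integrable_L_mul (i : ZMod N) (G : (ZMod N → ℝ) → ℝ) (hm : Measurable G) (C : ℝ)
    (hb : ∀ x, |G x| ≤ C) :
    Integrable (fun x => (x (i-1) - 2 * x i + x (i+1)) * G x) (nuEq N) := by
  have h1 := integrable_coord_mul (i-1) G hm C hb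
  have h2 := integrable_coord_mul i G hm C hb
  have h3 := integrable_coord_mul (i+1) G hm C hb
  have heq : (fun x : ZMod N → ℝ => (x (i-1) - 2 * x i + x (i+1)) * G x)
      = fun x => (x (i-1) * G x - 2 * (x i * G x)) + x (i+1) * G x := by
    funext x; ring
  rw [heq]
  exact (h1.sub (h2.const_mul 2)).add h3

lemma cont_pt (i : ZMod N) :
    Continuous (fun x : ZMod N → ℝ => (x (i-1), x i, x (i+1))) :=
  (continuous_apply _).prodMk ((continuous_apply _).prodMk (continuous_apply _))

lemma cont_Kfun (ha : ContDiff ℝ 1 a) (i : ZMod N) : Continuous (Kfun a i) := by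
  have hfa : Continuous (fun p => fderiv ℝ a p) := ha.continuous_fderiv one_ne_zero
  have h := hfa.comp (cont_pt i)
  exact ((h.clm_apply continuous_const).sub
    (continuous_const.mul (h.clm_apply continuous_const))).add
    (h.clm_apply continuous_const)

lemma norm_triple1 : ‖((1:ℝ),(0:ℝ),(0:ℝ))‖ = 1 := by simp [Prod.norm_def]
lemma norm_triple2 : ‖((0:ℝ),(1:ℝ),(0:ℝ))‖ = 1 := by simp [Prod.norm_def]
lemma norm_triple3 : ‖((0:ℝ),(0:ℝ),(1:ℝ))‖ = 1 := by simp [Prod.norm_def]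

lemma abs_Kfun_le (i : ZMod N) (Ma : ℝ) (hMa : ∀ p, ‖fderiv ℝ a p‖ ≤ Ma)
    (x : ZMod N → ℝ) : |Kfun a i x| ≤ 4 * Ma := by
  have hMa0 : 0 ≤ Ma := le_trans (norm_nonneg _) (hMa 0)
  set p := (x (i-1), x i, x (i+1))
  have key : ∀ v : ℝ × ℝ × ℝ, ‖v‖ = 1 → |fderiv ℝ a p v| ≤ Ma := by
    intro v hv
    calc |fderiv ℝ a p v| ≤ ‖fderiv ℝ a p‖ * ‖v‖ := (fderiv ℝ a p).le_opNorm v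
      _ = ‖fderiv ℝ a p‖ := by rw [hv, mul_one]
      _ ≤ Ma := hMa p
  have k1 := abs_le.1 (key _ norm_triple1)
  have k2 := abs_le.1 (key _ norm_triple2)
  have k3 := abs_le.1 (key _ norm_triple3)
  have : Kfun a i x = fderiv ℝ a p (1,0,0) - 2 * fderiv ℝ a p (0,1,0)
      + fderiv ℝ a p (0,0,1) := rfl
  rw [this]
  exact abs_le.2 ⟨by linarith [k1.1, k2.1, k2.2, k3.1], by linarith [k1.2, k2.1, k2.2, k3.2]⟩

lemma abs_Xfield_le (hρ : ContDiff ℝ 1 ρ) (Mρ : ℝ)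
    (hMρ : ∀ x, ‖fderiv ℝ ρ x‖ ≤ Mρ) (i : ZMod N) (x : ZMod N → ℝ) :
    |Xfield ρ i x| ≤ 4 * Mρ := by
  have hMρ0 : 0 ≤ Mρ := le_trans (norm_nonneg _) (hMρ 0)
  calc |Xfield ρ i x| ≤ ‖fderiv ℝ ρ x‖ * ‖latDir i‖ := (fderiv ℝ ρ x).le_opNorm _
    _ ≤ Mρ * 4 := mul_le_mul (hMρ x) (norm_latDir_le i) (norm_nonneg _) hMρ0
    _ = 4 * Mρ := by ring

lemma cont_Xfield (hρ : ContDiff ℝ 1 ρ) (i : ZMod N) : Continuous (Xfield ρ i) :=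
  (hρ.continuous_fderiv one_ne_zero).clm_apply continuous_const

lemma current_site (hN : 3 ≤ N) (ha : ContDiff ℝ 1 a) (Ma : ℝ)
    (hMa : ∀ p, ‖fderiv ℝ a p‖ ≤ Ma) (astar : ℝ) (hastar : 1 ≤ astar)
    (hbd : ∀ p, astar⁻¹ ≤ a p ∧ a p ≤ astar)
    (hρ : ContDiff ℝ 1 ρ) (Mρ : ℝ) (hMρ : ∀ x, |ρ x| ≤ Mρ ∧ ‖fderiv ℝ ρ x‖ ≤ Mρ)
    (i : ZMod N) :
    ∫ x, ρ x ^ 2 * wCurrent a i x ∂(nuEq N)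
      = ∫ x, 2 * (aSite a i x * ρ x * Xfield ρ i x) ∂(nuEq N) := by
  have hMρ0 : 0 ≤ Mρ := le_trans (abs_nonneg _) (hMρ 0).1
  have hMa0 : 0 ≤ Ma := le_trans (norm_nonneg _) (hMa 0)
  have hastar0 : 0 < astar := lt_of_lt_of_le one_pos hastar
  have habs : ∀ p, |a p| ≤ astar := fun p => abs_le.2
    ⟨le_trans (by linarith [inv_nonneg.2 hastar0.le]) (hbd p).1, (hbd p).2⟩
  have habsS : ∀ x : ZMod N → ℝ, |aSite a i x| ≤ astar := fun x => habs _
  have hρd : Differentiable ℝ ρ := hρ.differentiable one_ne_zero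
  have haSd : Differentiable ℝ (aSite a i) := (contDiff_aSite ha i).differentiable one_ne_zero
  set g : (ZMod N → ℝ) → ℝ := fun x => aSite a i x * (ρ x * ρ x) with hgdef
  have hg : ContDiff ℝ 1 g := (contDiff_aSite ha i).mul (hρ.mul hρ)
  have hbg : ∀ x, |g x| ≤ astar * (Mρ * Mρ) := by
    intro x
    rw [hgdef]
    simp only [abs_mul]
    exact mul_le_mul (habsS x) (mul_le_mul (hMρ x).1 (hMρ x).1 (abs_nonneg _) hMρ0)
      (by positivity) hastar0.le
  have hfρρ : ∀ x, fderiv ℝ (fun y => ρ y * ρ y) x = ρ x • fderiv ℝ ρ x + ρ x • fderiv ℝ ρ x :=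
    fun x => fderiv_mul (hρd x) (hρd x)
  have hfg : ∀ x, fderiv ℝ g x
      = aSite a i x • fderiv ℝ (fun y => ρ y * ρ y) x
        + (ρ x * ρ x) • fderiv ℝ (aSite a i) x :=
    fun x => fderiv_mul (haSd x) ((hρd x).mul (hρd x))
  set Mg : ℝ := astar * (2 * Mρ * Mρ) + Mρ * Mρ * Ma with hMgdef
  have hbg' : ∀ x, ‖fderiv ℝ g x‖ ≤ Mg := by
    intro x
    rw [hfg x]
    calc ‖aSite a i x • fderiv ℝ (fun y => ρ y * ρ y) x
        + (ρ x * ρ x) • fderiv ℝ (aSite a i) x‖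
        ≤ ‖aSite a i x • fderiv ℝ (fun y => ρ y * ρ y) x‖
          + ‖(ρ x * ρ x) • fderiv ℝ (aSite a i) x‖ := norm_add_le _ _
      _ = |aSite a i x| * ‖fderiv ℝ (fun y => ρ y * ρ y) x‖
          + |ρ x * ρ x| * ‖fderiv ℝ (aSite a i) x‖ := by
          rw [norm_smul, norm_smul, Real.norm_eq_abs, Real.norm_eq_abs]
      _ ≤ astar * (2 * Mρ * Mρ) + Mρ * Mρ * Ma := by
          have h1 : ‖fderiv ℝ (fun y => ρ y * ρ y) x‖ ≤ 2 * Mρ * Mρ := by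
            rw [hfρρ x]
            calc ‖ρ x • fderiv ℝ ρ x + ρ x • fderiv ℝ ρ x‖
                ≤ ‖ρ x • fderiv ℝ ρ x‖ + ‖ρ x • fderiv ℝ ρ x‖ := norm_add_le _ _
              _ = |ρ x| * ‖fderiv ℝ ρ x‖ + |ρ x| * ‖fderiv ℝ ρ x‖ := by
                  rw [norm_smul, Real.norm_eq_abs]
              _ ≤ Mρ * Mρ + Mρ * Mρ := by
                  have := mul_le_mul (hMρ x).1 (hMρ x).2 (norm_nonneg _) hMρ0
                  linarith
              _ = 2 * Mρ * Mρ := by ring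
          have h2 : ‖fderiv ℝ (aSite a i) x‖ ≤ Ma := norm_fderiv_aSite_le ha i x Ma hMa
          have h3 : |ρ x * ρ x| ≤ Mρ * Mρ := by
            rw [abs_mul]
            exact mul_le_mul (hMρ x).1 (hMρ x).1 (abs_nonneg _) hMρ0
          have h4 := mul_le_mul (habsS x) h1 (norm_nonneg _) hastar0.le
          have h5 := mul_le_mul h3 h2 (norm_nonneg _) (by positivity)
          linarith
  -- pointwise identities
  have hXg : ∀ x, fderiv ℝ g x (latDir i)
      = Kfun a i x * (ρ x * ρ x) + aSite a i x * (2 * ρ x * Xfield ρ i x) := by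
    intro x
    rw [hfg x]
    rw [ContinuousLinearMap.add_apply, ContinuousLinearMap.smul_apply,
      ContinuousLinearMap.smul_apply, hfρρ x, ContinuousLinearMap.add_apply,
      ContinuousLinearMap.smul_apply, fderiv_aSite_latDir ha hN i x]
    show aSite a i x * (ρ x * (fderiv ℝ ρ x (latDir i)) + ρ x * (fderiv ℝ ρ x (latDir i)))
      + (ρ x * ρ x) * Kfun a i x = _
    show _ = Kfun a i x * (ρ x * ρ x) + aSite a i x * (2 * ρ x * (fderiv ℝ ρ x (latDir i)))
    ring
  have hpt : ∀ x : ZMod N → ℝ, ρ x ^ 2 * wCurrent a i x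
      = (x (i-1) - 2 * x i + x (i+1)) * g x - Kfun a i x * (ρ x * ρ x) := by
    intro x
    rw [wCurrent_eq, hgdef]
    ring
  -- continuity / integrability
  have hcg : Continuous g := hg.continuous
  have hmg : Measurable g := hcg.measurable
  have hcK : Continuous (Kfun a i) := cont_Kfun ha i
  have hcρ : Continuous ρ := hρ.continuous
  have intLg : Integrable (fun x => (x (i-1) - 2 * x i + x (i+1)) * g x) (nuEq N) :=
    integrable_L_mul i g hmg (astar * (Mρ * Mρ)) hbg
  have intK : Integrable (fun x => Kfun a i x * (ρ x * ρ x)) (nuEq N) := by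
    refine integrable_bdd _ (hcK.mul (hcρ.mul hcρ)).measurable ((4 * Ma) * (Mρ * Mρ)) ?_
    intro x
    rw [abs_mul]
    refine mul_le_mul (abs_Kfun_le i Ma hMa x) ?_ (abs_nonneg _) (by positivity)
    rw [abs_mul]
    exact mul_le_mul (hMρ x).1 (hMρ x).1 (abs_nonneg _) hMρ0
  have intaX : Integrable (fun x => aSite a i x * (2 * ρ x * Xfield ρ i x)) (nuEq N) := by
    refine integrable_bdd _ (((contDiff_aSite ha i).continuous).mul
      ((continuous_const.mul hcρ).mul (cont_Xfield hρ i))).measurable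
      (astar * (2 * Mρ * (4 * Mρ))) ?_
    intro x
    rw [abs_mul]
    refine mul_le_mul (habsS x) ?_ (abs_nonneg _) hastar0.le
    calc |2 * ρ x * Xfield ρ i x| = 2 * |ρ x| * |Xfield ρ i x| := by
          rw [abs_mul, abs_mul, abs_two]
      _ ≤ 2 * Mρ * (4 * Mρ) := by
          have h1 := (hMρ x).1
          have h2 := abs_Xfield_le hρ Mρ (fun y => (hMρ y).2) i x
          have h3 : 2 * |ρ x| ≤ 2 * Mρ := by linarith
          exact mul_le_mul h3 h2 (abs_nonneg _) (by positivity)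
  have hMg0 : 0 ≤ Mg := by
    rw [hMgdef]
    exact add_nonneg (mul_nonneg hastar0.le
        (mul_nonneg (mul_nonneg two_pos.le hMρ0) hMρ0))
      (mul_nonneg (mul_nonneg hMρ0 hMρ0) hMa0)
  have hbg0 : 0 ≤ astar * (Mρ * Mρ) := mul_nonneg hastar0.le (mul_nonneg hMρ0 hMρ0)
  set Mtot : ℝ := astar * (Mρ * Mρ) + Mg with hMtotdef
  have hb1 : ∀ x, |g x| ≤ Mtot := fun x => le_trans (hbg x) (le_add_of_nonneg_right hMg0)
  have hb2 : ∀ x, ‖fderiv ℝ g x‖ ≤ Mtot := fun x => le_trans (hbg' x) (le_add_of_nonneg_left hbg0)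
  calc ∫ x, ρ x ^ 2 * wCurrent a i x ∂(nuEq N)
      = ∫ x, (x (i-1) - 2 * x i + x (i+1)) * g x - Kfun a i x * (ρ x * ρ x) ∂(nuEq N) :=
        integral_congr_ae (ae_of_all _ hpt)
    _ = (∫ x, (x (i-1) - 2 * x i + x (i+1)) * g x ∂(nuEq N))
        - ∫ x, Kfun a i x * (ρ x * ρ x) ∂(nuEq N) := integral_sub intLg intK
    _ = (∫ x, fderiv ℝ g x (latDir i) ∂(nuEq N))
        - ∫ x, Kfun a i x * (ρ x * ρ x) ∂(nuEq N) := by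
        rw [ibp_dir i g hg Mtot hb1 hb2]
    _ = (∫ x, Kfun a i x * (ρ x * ρ x) + aSite a i x * (2 * ρ x * Xfield ρ i x) ∂(nuEq N))
        - ∫ x, Kfun a i x * (ρ x * ρ x) ∂(nuEq N) := by
        rw [integral_congr_ae (ae_of_all _ hXg)]
    _ = ∫ x, aSite a i x * (2 * ρ x * Xfield ρ i x) ∂(nuEq N) := by
        rw [integral_add intK intaX]
        ring
    _ = ∫ x, 2 * (aSite a i x * ρ x * Xfield ρ i x) ∂(nuEq N) :=
        integral_congr_ae (ae_of_all _ fun x => by ring)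

end currentSite

lemma sq_le_four_mul {A B D : ℝ} (hA : 0 ≤ A) (hB : 0 ≤ B)
    (h : ∀ t : ℝ, 0 < t → |D| ≤ t * A + t⁻¹ * B) : D ^ 2 ≤ 4 * A * B := by
  rcases eq_or_lt_of_le hA with hA0 | hA0
  · have hD : D = 0 := by
      by_contra hD
      have habs : 0 < |D| := abs_pos.2 hD
      have ht : 0 < B / |D| + 1 := by positivity
      have h1 := h _ ht
      rw [← hA0, mul_zero, zero_add] at h1
      have h2 : (B / |D| + 1)⁻¹ * B < |D| := by
        rw [inv_mul_eq_div, div_lt_iff₀ ht]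
        have h3 : B / |D| * |D| = B := div_mul_cancel₀ B (ne_of_gt habs)
        nlinarith
      linarith
    rw [hD]
    have : (0:ℝ) ^ 2 = 0 := by norm_num
    rw [this]
    positivity
  rcases eq_or_lt_of_le hB with hB0 | hB0
  · have hD : D = 0 := by
      by_contra hD
      have habs : 0 < |D| := abs_pos.2 hD
      have ht : 0 < |D| / (2 * A) := by positivity
      have h1 := h _ ht
      rw [← hB0, mul_zero, add_zero, div_mul_eq_mul_div, mul_comm] at h1
      have h2 : A * |D| / (2 * A) = |D| / 2 := by
        field_simp
      rw [h2] at h1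
      linarith
    rw [hD]
    have : (0:ℝ) ^ 2 = 0 := by norm_num
    rw [this]
    positivity
  · set s := Real.sqrt (B / A) with hsdef
    have hs : 0 < s := Real.sqrt_pos.2 (div_pos hB0 hA0)
    have hs2 : s ^ 2 = B / A := Real.sq_sqrt (div_nonneg hB0.le hA0.le)
    have hs2' : s ^ 2 * A = B := by
      rw [hs2]
      field_simp
    have h1 := h s hs
    have h2 : D ^ 2 ≤ (s * A + s⁻¹ * B) ^ 2 := by
      have h3 := pow_le_pow_left₀ (abs_nonneg D) h1 2
      rwa [sq_abs] at h3
    have hexp : (s * A + s⁻¹ * B) ^ 2 = 4 * A * B := by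
      have hsne : s ≠ 0 := ne_of_gt hs
      field_simp
      nlinarith [hs2']
    linarith [hexp ▸ h2]

section mainAssembly

variable {N : ℕ} [NeZero N] {a : ℝ × ℝ × ℝ → ℝ} {ρ : (ZMod N → ℝ) → ℝ}

lemma integrable_sq_w (ha : ContDiff ℝ 1 a) (Ma : ℝ)
    (hMa : ∀ p, ‖fderiv ℝ a p‖ ≤ Ma) (astar : ℝ) (hastar : 1 ≤ astar)
    (hbd : ∀ p, astar⁻¹ ≤ a p ∧ a p ≤ astar)
    (hρ : ContDiff ℝ 1 ρ) (Mρ : ℝ) (hMρ : ∀ x, |ρ x| ≤ Mρ ∧ ‖fderiv ℝ ρ x‖ ≤ Mρ)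
    (i : ZMod N) : Integrable (fun x => ρ x ^ 2 * wCurrent a i x) (nuEq N) := by
  have hMρ0 : 0 ≤ Mρ := le_trans (abs_nonneg _) (hMρ 0).1
  have hastar0 : 0 < astar := lt_of_lt_of_le one_pos hastar
  have habsS : ∀ x : ZMod N → ℝ, |aSite a i x| ≤ astar := fun x => abs_le.2
    ⟨le_trans (by linarith [inv_nonneg.2 hastar0.le]) (hbd _).1, (hbd _).2⟩
  have hcρ : Continuous ρ := hρ.continuous
  set g : (ZMod N → ℝ) → ℝ := fun x => aSite a i x * (ρ x * ρ x) with hgdef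
  have hcg : Continuous g := ((contDiff_aSite ha i).continuous).mul (hcρ.mul hcρ)
  have hbg : ∀ x, |g x| ≤ astar * (Mρ * Mρ) := by
    intro x
    rw [hgdef]
    simp only [abs_mul]
    exact mul_le_mul (habsS x) (mul_le_mul (hMρ x).1 (hMρ x).1 (abs_nonneg _) hMρ0)
      (mul_nonneg (abs_nonneg _) (abs_nonneg _)) hastar0.le
  have hpt : ∀ x : ZMod N → ℝ, ρ x ^ 2 * wCurrent a i x
      = (x (i-1) - 2 * x i + x (i+1)) * g x - Kfun a i x * (ρ x * ρ x) := by
    intro x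
    rw [wCurrent_eq, hgdef]
    ring
  have intLg : Integrable (fun x => (x (i-1) - 2 * x i + x (i+1)) * g x) (nuEq N) :=
    integrable_L_mul i g hcg.measurable (astar * (Mρ * Mρ)) hbg
  have intK : Integrable (fun x => Kfun a i x * (ρ x * ρ x)) (nuEq N) := by
    refine integrable_bdd _ ((cont_Kfun ha i).mul (hcρ.mul hcρ)).measurable
      ((4 * Ma) * (Mρ * Mρ)) ?_
    intro x
    rw [abs_mul]
    refine mul_le_mul (abs_Kfun_le i Ma hMa x) ?_ (abs_nonneg _)
      (mul_nonneg (by norm_num) (le_trans (norm_nonneg _) (hMa 0)))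
    rw [abs_mul]
    exact mul_le_mul (hMρ x).1 (hMρ x).1 (abs_nonneg _) hMρ0
  have heq : (fun x => ρ x ^ 2 * wCurrent a i x)
      = fun x => (x (i-1) - 2 * x i + x (i+1)) * g x - Kfun a i x * (ρ x * ρ x) :=
    funext hpt
  rw [heq]
  exact intLg.sub intK

lemma integrable_A_term (ha : ContDiff ℝ 1 a) (astar : ℝ) (hastar : 1 ≤ astar)
    (hbd : ∀ p, astar⁻¹ ≤ a p ∧ a p ≤ astar)
    (hρ : ContDiff ℝ 1 ρ) (Mρ : ℝ) (hMρ : ∀ x, |ρ x| ≤ Mρ) (c : ZMod N → ℝ)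
    (i : ZMod N) : Integrable (fun x => aSite a i x * c i ^ 2 * ρ x ^ 2) (nuEq N) := by
  have hMρ0 : 0 ≤ Mρ := le_trans (abs_nonneg _) (hMρ 0)
  have hastar0 : 0 < astar := lt_of_lt_of_le one_pos hastar
  have habsS : ∀ x : ZMod N → ℝ, |aSite a i x| ≤ astar := fun x => abs_le.2
    ⟨le_trans (by linarith [inv_nonneg.2 hastar0.le]) (hbd _).1, (hbd _).2⟩
  refine integrable_bdd _ ((((contDiff_aSite ha i).continuous).mul continuous_const).mul
    (hρ.continuous.pow 2)).measurable (astar * c i ^ 2 * Mρ ^ 2) ?_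
  intro x
  rw [abs_mul, abs_mul, abs_of_nonneg (sq_nonneg (c i)), abs_pow]
  exact mul_le_mul (mul_le_mul (habsS x) le_rfl (sq_nonneg _) hastar0.le)
    (pow_le_pow_left₀ (abs_nonneg _) (hMρ x) 2) (pow_nonneg (abs_nonneg _) 2) (by positivity)

lemma integrable_B_term (ha : ContDiff ℝ 1 a) (astar : ℝ) (hastar : 1 ≤ astar)
    (hbd : ∀ p, astar⁻¹ ≤ a p ∧ a p ≤ astar)
    (hρ : ContDiff ℝ 1 ρ) (Mρ : ℝ) (hMρ : ∀ x, ‖fderiv ℝ ρ x‖ ≤ Mρ)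
    (i : ZMod N) : Integrable (fun x => aSite a i x * (Xfield ρ i x) ^ 2) (nuEq N) := by
  have hMρ0 : 0 ≤ Mρ := le_trans (norm_nonneg _) (hMρ 0)
  have hastar0 : 0 < astar := lt_of_lt_of_le one_pos hastar
  have habsS : ∀ x : ZMod N → ℝ, |aSite a i x| ≤ astar := fun x => abs_le.2
    ⟨le_trans (by linarith [inv_nonneg.2 hastar0.le]) (hbd _).1, (hbd _).2⟩
  refine integrable_bdd _ (((contDiff_aSite ha i).continuous).mul
    ((cont_Xfield hρ i).pow 2)).measurable (astar * (4 * Mρ) ^ 2) ?_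
  intro x
  rw [abs_mul, abs_pow]
  exact mul_le_mul (habsS x)
    (pow_le_pow_left₀ (abs_nonneg _) (abs_Xfield_le hρ Mρ hMρ i x) 2)
    (pow_nonneg (abs_nonneg _) 2) hastar0.le

lemma integrable_cross_term (ha : ContDiff ℝ 1 a) (astar : ℝ) (hastar : 1 ≤ astar)
    (hbd : ∀ p, astar⁻¹ ≤ a p ∧ a p ≤ astar)
    (hρ : ContDiff ℝ 1 ρ) (Mρ : ℝ) (hMρ : ∀ x, |ρ x| ≤ Mρ ∧ ‖fderiv ℝ ρ x‖ ≤ Mρ)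
    (c : ZMod N → ℝ) (i : ZMod N) :
    Integrable (fun x => c i * (2 * (aSite a i x * ρ x * Xfield ρ i x))) (nuEq N) := by
  have hMρ0 : 0 ≤ Mρ := le_trans (abs_nonneg _) (hMρ 0).1
  have hastar0 : 0 < astar := lt_of_lt_of_le one_pos hastar
  have habsS : ∀ x : ZMod N → ℝ, |aSite a i x| ≤ astar := fun x => abs_le.2
    ⟨le_trans (by linarith [inv_nonneg.2 hastar0.le]) (hbd _).1, (hbd _).2⟩
  refine integrable_bdd _ (continuous_const.mul (continuous_const.mul
    ((((contDiff_aSite ha i).continuous).mul hρ.continuous).mul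
      (cont_Xfield hρ i)))).measurable (|c i| * (2 * (astar * Mρ * (4 * Mρ)))) ?_
  intro x
  rw [abs_mul]
  refine mul_le_mul le_rfl ?_ (abs_nonneg _) (abs_nonneg _)
  rw [abs_mul, abs_two]
  refine mul_le_mul le_rfl ?_ (abs_nonneg _) (by norm_num)
  rw [abs_mul, abs_mul]
  refine mul_le_mul (mul_le_mul (habsS x) (hMρ x).1 (abs_nonneg _) hastar0.le)
    (abs_Xfield_le hρ Mρ (fun y => (hMρ y).2) i x) (abs_nonneg _) (by positivity)

lemma aSite_nonneg (astar : ℝ) (hastar : 1 ≤ astar)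
    (hbd : ∀ p, astar⁻¹ ≤ a p ∧ a p ≤ astar) (i : ZMod N) (x : ZMod N → ℝ) :
    0 ≤ aSite a i x := by
  have hastar0 : 0 < astar := lt_of_lt_of_le one_pos hastar
  exact le_trans (inv_nonneg.2 hastar0.le) (hbd _).1

lemma sum_bound (ha : ContDiff ℝ 1 a) (astar : ℝ) (hastar : 1 ≤ astar)
    (hbd : ∀ p, astar⁻¹ ≤ a p ∧ a p ≤ astar)
    (hρ : ContDiff ℝ 1 ρ) (Mρ : ℝ) (hMρ : ∀ x, |ρ x| ≤ Mρ ∧ ‖fderiv ℝ ρ x‖ ≤ Mρ)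
    (c : ZMod N → ℝ) (t : ℝ) (ht : 0 < t) :
    ∫ x, ∑ i : ZMod N, c i * (2 * (aSite a i x * ρ x * Xfield ρ i x)) ∂(nuEq N)
      ≤ t * (∫ x, ∑ i : ZMod N, aSite a i x * c i ^ 2 * ρ x ^ 2 ∂(nuEq N))
        + t⁻¹ * (∫ x, ∑ i : ZMod N, aSite a i x * (Xfield ρ i x) ^ 2 ∂(nuEq N)) := by
  have intL : Integrable (fun x => ∑ i : ZMod N,
      c i * (2 * (aSite a i x * ρ x * Xfield ρ i x))) (nuEq N) :=
    integrable_finset_sum _ (fun i _ => integrable_cross_term ha astar hastar hbd hρ Mρ hMρ c i)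
  have intA : Integrable (fun x => ∑ i : ZMod N,
      aSite a i x * c i ^ 2 * ρ x ^ 2) (nuEq N) :=
    integrable_finset_sum _ (fun i _ =>
      integrable_A_term ha astar hastar hbd hρ Mρ (fun x => (hMρ x).1) c i)
  have intB : Integrable (fun x => ∑ i : ZMod N,
      aSite a i x * (Xfield ρ i x) ^ 2) (nuEq N) :=
    integrable_finset_sum _ (fun i _ =>
      integrable_B_term ha astar hastar hbd hρ Mρ (fun x => (hMρ x).2) i)
  have hpoint : ∀ x : ZMod N → ℝ, ∑ i : ZMod N, c i * (2 * (aSite a i x * ρ x * Xfield ρ i x))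
      ≤ t * (∑ i : ZMod N, aSite a i x * c i ^ 2 * ρ x ^ 2)
        + t⁻¹ * (∑ i : ZMod N, aSite a i x * (Xfield ρ i x) ^ 2) := by
    intro x
    rw [Finset.mul_sum, Finset.mul_sum, ← Finset.sum_add_distrib]
    refine Finset.sum_le_sum fun i _ => ?_
    have ha0 : 0 ≤ aSite a i x := aSite_nonneg astar hastar hbd i x
    have ht' : t * t⁻¹ = 1 := mul_inv_cancel₀ (ne_of_gt ht)
    set u := c i * ρ x
    set v := Xfield ρ i x
    have key : 2 * (u * v) ≤ t * u ^ 2 + t⁻¹ * v ^ 2 := by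
      nlinarith [sq_nonneg (t * u - v), ht, ht', mul_pos ht ht]
    calc c i * (2 * (aSite a i x * ρ x * v))
        = aSite a i x * (2 * (u * v)) := by rw [show u = c i * ρ x from rfl]; ring
      _ ≤ aSite a i x * (t * u ^ 2 + t⁻¹ * v ^ 2) := mul_le_mul_of_nonneg_left key ha0
      _ = t * (aSite a i x * c i ^ 2 * ρ x ^ 2) + t⁻¹ * (aSite a i x * v ^ 2) := by
          rw [show u = c i * ρ x from rfl]; ring
  calc ∫ x, ∑ i : ZMod N, c i * (2 * (aSite a i x * ρ x * Xfield ρ i x)) ∂(nuEq N)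
      ≤ ∫ x, t * (∑ i : ZMod N, aSite a i x * c i ^ 2 * ρ x ^ 2)
          + t⁻¹ * (∑ i : ZMod N, aSite a i x * (Xfield ρ i x) ^ 2) ∂(nuEq N) :=
        integral_mono intL ((intA.const_mul t).add (intB.const_mul t⁻¹)) hpoint
    _ = _ := by
        rw [integral_add (intA.const_mul t) (intB.const_mul t⁻¹),
          MeasureTheory.integral_const_mul, MeasureTheory.integral_const_mul]

end mainAssembly

end helpersIBP

/-- **Current–Dirichlet form estimate.**
For every vector of coefficients `c` and every `C¹` bounded function `ρ` with bounded
first derivatives,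
`(∫ ρ²·Σ_i c_i w_i dν)² ≤ 4·(∫ Σ_i a_i c_i² ρ² dν)·(∫ Σ_i a_i (X_i ρ)² dν)`. -/
theorem current_dirichlet_form_estimate
    (N : ℕ) [NeZero N] (hN : 3 ≤ N)
    (a : ℝ × ℝ × ℝ → ℝ) (astar : ℝ) (hastar : 1 ≤ astar)
    (ha : ContDiff ℝ 1 a) (hda : ∃ M : ℝ, ∀ p, ‖fderiv ℝ a p‖ ≤ M)
    (hbd : ∀ p, astar⁻¹ ≤ a p ∧ a p ≤ astar)
    (c : ZMod N → ℝ) (ρ : (ZMod N → ℝ) → ℝ) (hρ : ContDiff ℝ 1 ρ)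
    (hρb : ∃ M : ℝ, ∀ x, |ρ x| ≤ M ∧ ‖fderiv ℝ ρ x‖ ≤ M) :
    (∫ x, ρ x ^ 2 * ∑ i : ZMod N, c i * wCurrent a i x ∂(nuEq N)) ^ 2
      ≤ 4 * (∫ x, ∑ i : ZMod N, aSite a i x * c i ^ 2 * ρ x ^ 2 ∂(nuEq N))
          * (∫ x, ∑ i : ZMod N, aSite a i x * (Xfield ρ i x) ^ 2 ∂(nuEq N)) := by

  obtain ⟨Ma, hMa⟩ := hda
  obtain ⟨Mρ, hMρ⟩ := hρb
  set A := ∫ x, ∑ i : ZMod N, aSite a i x * c i ^ 2 * ρ x ^ 2 ∂(nuEq N) with hAdef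
  set B := ∫ x, ∑ i : ZMod N, aSite a i x * (Xfield ρ i x) ^ 2 ∂(nuEq N) with hBdef
  have hA : 0 ≤ A := integral_nonneg fun x => Finset.sum_nonneg fun i _ =>
    mul_nonneg (mul_nonneg (aSite_nonneg astar hastar hbd i x) (sq_nonneg _)) (sq_nonneg _)
  have hB : 0 ≤ B := integral_nonneg fun x => Finset.sum_nonneg fun i _ =>
    mul_nonneg (aSite_nonneg astar hastar hbd i x) (sq_nonneg _)
  have hD : (∫ x, ρ x ^ 2 * ∑ i : ZMod N, c i * wCurrent a i x ∂(nuEq N))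
      = ∫ x, ∑ i : ZMod N, c i * (2 * (aSite a i x * ρ x * Xfield ρ i x)) ∂(nuEq N) := by
    have step1 : (fun x => ρ x ^ 2 * ∑ i : ZMod N, c i * wCurrent a i x)
        = fun x => ∑ i : ZMod N, c i * (ρ x ^ 2 * wCurrent a i x) := by
      funext x
      rw [Finset.mul_sum]
      refine Finset.sum_congr rfl fun i _ => by ring
    rw [step1]
    rw [integral_finset_sum _ (fun i _ =>
      (integrable_sq_w ha Ma hMa astar hastar hbd hρ Mρ hMρ i).const_mul (c i))]
    have step2 : ∀ i : ZMod N, ∫ x, c i * (ρ x ^ 2 * wCurrent a i x) ∂(nuEq N)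
        = ∫ x, c i * (2 * (aSite a i x * ρ x * Xfield ρ i x)) ∂(nuEq N) := by
      intro i
      rw [MeasureTheory.integral_const_mul, MeasureTheory.integral_const_mul,
        current_site hN ha Ma hMa astar hastar hbd hρ Mρ hMρ i]
    rw [Finset.sum_congr rfl (fun i _ => step2 i)]
    rw [← integral_finset_sum _ (fun i _ =>
      integrable_cross_term ha astar hastar hbd hρ Mρ hMρ c i)]
  rw [hD]
  refine sq_le_four_mul hA hB fun t ht => abs_le.2 ⟨?_, ?_⟩
  · -- lower bound: -(tA + t⁻¹B) ≤ D
    have hneg : -(∫ x, ∑ i : ZMod N, c i * (2 * (aSite a i x * ρ x * Xfield ρ i x)) ∂(nuEq N))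
        = ∫ x, ∑ i : ZMod N, (-c) i * (2 * (aSite a i x * ρ x * Xfield ρ i x)) ∂(nuEq N) := by
      rw [← integral_neg]
      refine integral_congr_ae (ae_of_all _ fun x => ?_)
      show -∑ i : ZMod N, c i * (2 * (aSite a i x * ρ x * Xfield ρ i x)) = _
      rw [← Finset.sum_neg_distrib]
      refine Finset.sum_congr rfl fun i _ => ?_
      show -(c i * (2 * (aSite a i x * ρ x * Xfield ρ i x))) = _
      simp only [Pi.neg_apply]
      ring
    have hbnd := sum_bound ha astar hastar hbd hρ Mρ hMρ (-c) t ht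
    have hAc : (∫ x, ∑ i : ZMod N, aSite a i x * ((-c) i) ^ 2 * ρ x ^ 2 ∂(nuEq N)) = A := by
      rw [hAdef]
      refine integral_congr_ae (ae_of_all _ fun x => Finset.sum_congr rfl fun i _ => ?_)
      simp [Pi.neg_apply, neg_sq]
    rw [hAc] at hbnd
    rw [← hneg] at hbnd
    linarith
  · exact sum_bound ha astar hastar hbd hρ Mρ hMρ c t ht
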